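/- arXiv:1709.00632 — 4 statements merged into one kernel-verified Lean document; each statement's English description precedes it below -/
import Mathlib

section
/- Assume (G0), (G4) and (G5). Then a function u ∈ C⁰(X) with u ≥ u_∅ is G-convex if and only if there exists a lower semicontinuous function v : cl(Y) → cl(Z) with v(y_∅) ≤ z_∅ such that u(x) = max_{y ∈ cl(Y)} G(x,y,v(y)) for all x ∈ X (with the maximum attained). -/
/-!
Common framework for "The principal-agent problem: convexity/concavity of the
principal's problem" (McCann–Zhang).

Agent types live in `X ⊆ ℝ^m`, product types in `Y ⊆ ℝ^n`, prices in
`Z = (z̲, z̄) ⊆ ℝ` with `z̲` finite and `z̄ ∈ (z̲, +∞]` (an `EReal`).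
The direct utility is `G(x,y,z)` and the principal's profit density `π(x,y,z)`.
-/

open Set MeasureTheory Filter Topology

noncomputable section

namespace PrincipalAgent

/-- Euclidean space `ℝ^k`. -/
abbrev E (k : ℕ) : Type := EuclideanSpace ℝ (Fin k)

variable {m n : ℕ}

/-- The open price interval `(z̲, z̄)`, with `z̄` possibly `+∞`. -/
def priceSet (zl : ℝ) (zu : EReal) : Set ℝ := {z : ℝ | zl < z ∧ (z : EReal) < zu}

/-- The filter of `z → z̄` from the left (from within `Z`); when `z̄ = +∞`
this is `atTop`. -/
def zFilter (zu : EReal) : Filter ℝ :=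
  Filter.comap (fun z : ℝ => (z : EReal)) (𝓝[<] zu)

/-- `G_x`, the gradient of `G` in the agent variable. -/
def Gx (G : E m → E n → ℝ → ℝ) (x : E m) (y : E n) (z : ℝ) : E m :=
  gradient (fun x' => G x' y z) x

/-- `G_z`, the partial derivative of `G` in the price variable. -/
def Gz (G : E m → E n → ℝ → ℝ) (x : E m) (y : E n) (z : ℝ) : ℝ :=
  deriv (fun z' => G x y z') z

/-- The map `(y,z) ↦ (G_x, G)(x,y,z) ∈ ℝ^m × ℝ ≅ ℝ^{m+1}`. -/
def Phi (G : E m → E n → ℝ → ℝ) (x : E m) (p : E n × ℝ) : E m × ℝ :=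
  (Gx G x p.1 p.2, G x p.1 p.2)

/-- `u : X → ℝ` is `G`-convex (Definition 3.2). -/
def GConvex (X : Set (E m)) (Y : Set (E n)) (Z : Set ℝ)
    (G : E m → E n → ℝ → ℝ) (u : E m → ℝ) : Prop :=
  ∀ x₀ ∈ X, ∃ y₀ ∈ closure Y, ∃ z₀ ∈ closure Z,
    u x₀ = G x₀ y₀ z₀ ∧ ∀ x ∈ X, G x y₀ z₀ ≤ u x

/-- The `G`-subdifferential `∂^G u(x)` of `u` at `x` (Definition 3.3).  Under
(G4), `z ↦ G(x,y,z)` is injective on `cl Z`, so the price `z` appearing below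
is exactly `H(x,y,u(x))`, the unique price at which product `y` brings agent
`x` the utility `u(x)`. -/
def GSubdiff (X : Set (E m)) (Y : Set (E n)) (Z : Set ℝ)
    (G : E m → E n → ℝ → ℝ) (u : E m → ℝ) (x : E m) : Set (E n) :=
  {y | y ∈ closure Y ∧ ∃ z ∈ closure Z, G x y z = u x ∧ ∀ x' ∈ X, G x' y z ≤ u x'}

/-- The `G`-segment (2.1) at `x₀`: a curve `γ = (y_t, z_t)` in `cl(Y × Z)`
on which `(G_x, G)(x₀, ·, ·)` is affinely interpolated between its endpoint
values. -/
def IsGSegment (Y : Set (E n)) (Z : Set ℝ) (G : E m → E n → ℝ → ℝ)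
    (x₀ : E m) (γ : ℝ → E n × ℝ) : Prop :=
  (∀ t ∈ Icc (0:ℝ) 1, γ t ∈ closure Y ×ˢ closure Z) ∧
  ∀ t ∈ Icc (0:ℝ) 1,
    Phi G x₀ (γ t) = (1 - t) • Phi G x₀ (γ 0) + t • Phi G x₀ (γ 1)

/-- (G0): `G ∈ C¹(cl(X × Y × Z))`. -/
def CondG0 (X : Set (E m)) (Y : Set (E n)) (Z : Set ℝ)
    (G : E m → E n → ℝ → ℝ) : Prop :=
  ContDiffOn ℝ 1 (fun p : E m × E n × ℝ => G p.1 p.2.1 p.2.2)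
    (closure X ×ˢ (closure Y ×ˢ closure Z))

/-- (G1): for each `x ∈ X`, the map `(y,z) ∈ cl(Y × Z) ↦ (G_x, G)(x,y,z)` is a
homeomorphism onto its range (continuous, injective, with continuous inverse). -/
def CondG1 (X : Set (E m)) (Y : Set (E n)) (Z : Set ℝ)
    (G : E m → E n → ℝ → ℝ) : Prop :=
  ∀ x ∈ X, ContinuousOn (Phi G x) (closure Y ×ˢ closure Z) ∧
    InjOn (Phi G x) (closure Y ×ˢ closure Z) ∧
    ∃ ψ : E m × ℝ → E n × ℝ,
      ContinuousOn ψ (Phi G x '' (closure Y ×ˢ closure Z)) ∧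
      ∀ p ∈ closure Y ×ˢ closure Z, ψ (Phi G x p) = p

/-- (G2): the range `(G_x,G)(x, cl(Y × Z))` is convex. -/
def CondG2 (X : Set (E m)) (Y : Set (E n)) (Z : Set ℝ)
    (G : E m → E n → ℝ → ℝ) : Prop :=
  ∀ x ∈ X, Convex ℝ (Phi G x '' (closure Y ×ˢ closure Z))

/-- (G3): `t ↦ G(x, y_t, z_t)` is convex along every `G`-segment. -/
def CondG3 (X : Set (E m)) (Y : Set (E n)) (Z : Set ℝ)
    (G : E m → E n → ℝ → ℝ) : Prop :=
  ∀ x ∈ X, ∀ x₀ ∈ X, ∀ γ : ℝ → E n × ℝ, IsGSegment Y Z G x₀ γ →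
    ConvexOn ℝ (Icc (0:ℝ) 1) (fun t => G x (γ t).1 (γ t).2)

/-- (G4): `G_z < 0` on `X × cl Y × cl Z`. -/
def CondG4 (X : Set (E m)) (Y : Set (E n)) (Z : Set ℝ)
    (G : E m → E n → ℝ → ℝ) : Prop :=
  ∀ x ∈ X, ∀ y ∈ closure Y, ∀ z ∈ closure Z, Gz G x y z < 0

/-- (G5): `π ∈ C⁰(cl(X × Y × Z))`; `(y₀, z₀) = (y_∅, z_∅)` lies in `cl(Y × Z)`;
`Gbar x y = G(x,y,z̄) := lim_{z→z̄} G(x,y,z)` satisfies `Gbar x y ≤ G(x,y_∅,z_∅)`,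
strictly when `z̄ = +∞`, in which case also `G(x,y,z) < G(x,y_∅,z_∅)` for all
sufficiently large `z`. -/
def CondG5 (X : Set (E m)) (Y : Set (E n)) (Z : Set ℝ) (zu : EReal)
    (G : E m → E n → ℝ → ℝ) (π : E m → E n → ℝ → ℝ)
    (Gbar : E m → E n → ℝ) (y0 : E n) (z0 : ℝ) : Prop :=
  ContinuousOn (fun p : E m × E n × ℝ => π p.1 p.2.1 p.2.2)
    (closure X ×ˢ (closure Y ×ˢ closure Z)) ∧
  y0 ∈ closure Y ∧ z0 ∈ closure Z ∧
  (∀ x ∈ X, ∀ y ∈ closure Y,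
    Tendsto (fun z : ℝ => G x y z) (zFilter zu) (𝓝 (Gbar x y)) ∧
    Gbar x y ≤ G x y0 z0) ∧
  (zu = ⊤ → (∀ x ∈ X, ∀ y ∈ closure Y, Gbar x y < G x y0 z0) ∧
    ∃ zbig : ℝ, ∀ z : ℝ, zbig ≤ z → ∀ x ∈ X, ∀ y ∈ closure Y, G x y z < G x y0 z0)

/-- (G6): `G ∈ C²(cl(X×Y×Z))` and the `(m+1)×(n+1)` matrix
`D_x̄ D_ȳ Ḡ(x,-1,y,z)` (where `Ḡ((x,x₀),(y,z)) = x₀ G(x,y,z)`) has full rank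
`n+1`; equivalently the linear map `v ↦ (D_x(D_ȳG · v), D_ȳG · v)` is injective. -/
def CondG6 (X : Set (E m)) (Y : Set (E n)) (Z : Set ℝ)
    (G : E m → E n → ℝ → ℝ) : Prop :=
  ContDiffOn ℝ 2 (fun p : E m × E n × ℝ => G p.1 p.2.1 p.2.2)
    (closure X ×ˢ (closure Y ×ˢ closure Z)) ∧
  ∀ x ∈ closure X, ∀ y ∈ closure Y, ∀ z ∈ closure Z,
    Function.Injective (fun v : E n × ℝ =>
      ((fderiv ℝ (fun x' : E m =>
          (fderiv ℝ (fun q : E n × ℝ => G x' q.1 q.2) (y, z)) v) x : E m →L[ℝ] ℝ),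
       (fderiv ℝ (fun q : E n × ℝ => G x q.1 q.2) (y, z)) v))

/-- The map `x ↦ (G_y/G_z)(x,y,z)`. -/
def Ratio (G : E m → E n → ℝ → ℝ) (x : E m) (y : E n) (z : ℝ) : E n :=
  (Gz G x y z)⁻¹ • gradient (fun y' => G x y' z) y

/-- (G7): `x ↦ (G_y/G_z)(x,y,z)` is one-to-one on `X`. -/
def CondG7 (X : Set (E m)) (Y : Set (E n)) (Z : Set ℝ)
    (G : E m → E n → ℝ → ℝ) : Prop :=
  ∀ y ∈ closure Y, ∀ z ∈ closure Z, InjOn (fun x => Ratio G x y z) X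

/-- (G8): the range `(G_y/G_z)(X,y,z)` is convex. -/
def CondG8 (X : Set (E m)) (Y : Set (E n)) (Z : Set ℝ)
    (G : E m → E n → ℝ → ℝ) : Prop :=
  ∀ y ∈ closure Y, ∀ z ∈ closure Z, Convex ℝ ((fun x => Ratio G x y z) '' X)

/-- `ȳ_G` solves (3.2): for `u` `G`-convex and `x ∈ dom Du`,
`ȳ_G(x, u(x), Du(x))` is the unique `(y,z) ∈ cl(Y×Z)` with `u(x) = G(x,y,z)`
and `Du(x) = G_x(x,y,z)`.  We record the defining inverse property, together
with continuity (which holds under (G0)–(G1)). -/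
def IsYbar (X : Set (E m)) (Y : Set (E n)) (Z : Set ℝ)
    (G : E m → E n → ℝ → ℝ) (ybar : E m → ℝ → E m → E n × ℝ) : Prop :=
  (∀ x ∈ X, ∀ y ∈ closure Y, ∀ z ∈ closure Z,
    ybar x (G x y z) (Gx G x y z) = (y, z)) ∧
  ContinuousOn (fun p : E m × ℝ × E m => ybar p.1 p.2.1 p.2.2)
    {p : E m × ℝ × E m | ∃ x ∈ X, ∃ y ∈ closure Y, ∃ z ∈ closure Z,
      p = (x, G x y z, Gx G x y z)}

/-- A Borel probability measure on `X`, absolutely continuous with respect to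
`m`-dimensional Lebesgue measure. -/
def AdmissibleMeasure (X : Set (E m)) (μ : Measure (E m)) : Prop :=
  IsProbabilityMeasure μ ∧ μ ≪ (volume : Measure (E m)) ∧ μ Xᶜ = 0

/-- The principal's profit functional
`𝚷(u) = ∫_X π(x, ȳ_G(x, u(x), Du(x))) dμ(x)`. -/
def Profit (X : Set (E m)) (π : E m → E n → ℝ → ℝ)
    (ybar : E m → ℝ → E m → E n × ℝ) (μ : Measure (E m)) (u : E m → ℝ) : ℝ :=
  ∫ x in X, π x (ybar x (u x) (gradient u x)).1 (ybar x (u x) (gradient u x)).2 ∂μ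

/-- The squared `W^{1,2}(X,dμ)`-distance `‖u₁ - u₀‖²_{W^{1,2}(X,dμ)}`. -/
def WDistSq (X : Set (E m)) (μ : Measure (E m)) (u₀ u₁ : E m → ℝ) : ℝ :=
  ∫ x in X, ((u₁ x - u₀ x) ^ 2 + ‖gradient u₁ x - gradient u₀ x‖ ^ 2) ∂μ

/-- `u₀ = u₁` as elements of `W^{1,2}(X, dμ)`. -/
def WEq (X : Set (E m)) (μ : Measure (E m)) (u₀ u₁ : E m → ℝ) : Prop :=
  ∀ᵐ x ∂(μ.restrict X), u₀ x = u₁ x ∧ gradient u₀ x = gradient u₁ x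


/-!
Since `G` decreases in the price, the prices at which a product `y` stays below `u` for every
agent form a closed up-set of `cl Z`; its least element `v(y)` is lower semicontinuous in `y`,
because `v(y) > c` is witnessed by one agent with `u(x) < G(x, y, c)`, an open condition in `y`.
If `u` is `G`-convex, lowering the price of a supporting pair `(y, z)` to `v(y)` keeps it
supporting, so the menu `v` reproduces `u`; products with no such price are priced at `z̄`,
which (G5) makes unattractive. Conversely a maximising product `y` of a menu, priced at
`v(y)`, supports `u`, and (G5) rules out `v(y) = +∞`.
-/

section PriceMenu

variable {α β : Type*}

def supportPrices (X : Set α) (a : ℝ) (b : EReal) (G : α → β → ℝ → ℝ) (u : α → ℝ) (y : β) :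
    Set ℝ :=
  {z | (z : EReal) ∈ Icc (a : EReal) b ∧ ∀ x ∈ X, G x y z ≤ u x}

open Classical in
/-- The paper's dual menu `y ↦ sup_x H(x, y, u(x))`, written without the inverse `H` of
`z ↦ G(x, y, z)`: when `G` decreases in the price it is the least support price. -/
def priceMenu (X : Set α) (a : ℝ) (b : EReal) (G : α → β → ℝ → ℝ) (u : α → ℝ) (y : β) : EReal :=
  if (supportPrices X a b G u y).Nonempty then (sInf (supportPrices X a b G u y) : ℝ) else b

variable {X : Set α} {a : ℝ} {b : EReal} {G : α → β → ℝ → ℝ} {u : α → ℝ} {x : α} {y : β}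
  {z c : ℝ}

lemma bddBelow_supportPrices : BddBelow (supportPrices X a b G u y) :=
  ⟨a, fun _ hz => EReal.coe_le_coe_iff.mp hz.1.1⟩

lemma isClosed_supportPrices
    (hcont : ∀ x ∈ X, ContinuousOn (G x y) ((↑) ⁻¹' Icc (a : EReal) b)) :
    IsClosed (supportPrices X a b G u y) := by
  have hI : IsClosed ((↑) ⁻¹' Icc (a : EReal) b : Set ℝ) :=
    isClosed_Icc.preimage continuous_coe_real_ereal
  have hsub : closure (supportPrices X a b G u y) ⊆ (↑) ⁻¹' Icc (a : EReal) b :=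
    closure_minimal (fun _ hz => hz.1) hI
  refine isClosed_of_closure_subset fun z hz => ⟨hsub hz, fun x hx => ?_⟩
  exact le_on_closure (fun _ hz' => hz'.2 x hx) ((hcont x hx).mono hsub) continuousOn_const hz

lemma sInf_mem_supportPrices
    (hcont : ∀ x ∈ X, ContinuousOn (G x y) ((↑) ⁻¹' Icc (a : EReal) b))
    (hne : (supportPrices X a b G u y).Nonempty) :
    sInf (supportPrices X a b G u y) ∈ supportPrices X a b G u y :=
  (isClosed_supportPrices hcont).csInf_mem hne bddBelow_supportPrices

lemma mem_supportPrices_of_le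
    (hanti : ∀ x ∈ X, AntitoneOn (G x y) ((↑) ⁻¹' Icc (a : EReal) b))
    (hz : z ∈ supportPrices X a b G u y) (hc : (c : EReal) ∈ Icc (a : EReal) b) (hzc : z ≤ c) :
    c ∈ supportPrices X a b G u y :=
  ⟨hc, fun x hx => (hanti x hx hz.1 hc hzc).trans (hz.2 x hx)⟩

lemma priceMenu_le_coe (hz : z ∈ supportPrices X a b G u y) : priceMenu X a b G u y ≤ z := by
  rw [priceMenu, if_pos ⟨z, hz⟩]
  exact EReal.coe_le_coe (csInf_le bddBelow_supportPrices hz)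

lemma priceMenu_mem_Icc (hab : (a : EReal) ≤ b) : priceMenu X a b G u y ∈ Icc (a : EReal) b := by
  unfold priceMenu
  split_ifs with hne
  · obtain ⟨z, hz⟩ := hne
    refine ⟨EReal.coe_le_coe (le_csInf ⟨z, hz⟩ fun _ hz' => EReal.coe_le_coe_iff.mp hz'.1.1), ?_⟩
    exact (EReal.coe_le_coe (csInf_le bddBelow_supportPrices hz)).trans hz.1.2
  · exact ⟨hab, le_rfl⟩

lemma coe_lt_priceMenu
    (hcont : ∀ x ∈ X, ContinuousOn (G x y) ((↑) ⁻¹' Icc (a : EReal) b))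
    (hanti : ∀ x ∈ X, AntitoneOn (G x y) ((↑) ⁻¹' Icc (a : EReal) b))
    (hc : (c : EReal) ∈ Ico (a : EReal) b) (hcT : c ∉ supportPrices X a b G u y) :
    (c : EReal) < priceMenu X a b G u y := by
  unfold priceMenu
  split_ifs with hne
  · refine EReal.coe_lt_coe_iff.mpr (lt_of_not_ge fun hle => hcT ?_)
    exact mem_supportPrices_of_le hanti (sInf_mem_supportPrices hcont hne)
      (Ico_subset_Icc_self hc) hle
  · exact hc.2

theorem lowerSemicontinuousOn_priceMenu [TopologicalSpace β] {K : Set β} (hab : (a : EReal) ≤ b)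
    (hcont_y : ∀ x ∈ X, ∀ z ∈ (↑) ⁻¹' Icc (a : EReal) b, ContinuousOn (fun y => G x y z) K)
    (hcont_z : ∀ x ∈ X, ∀ y ∈ K, ContinuousOn (G x y) ((↑) ⁻¹' Icc (a : EReal) b))
    (hanti : ∀ x ∈ X, ∀ y ∈ K, AntitoneOn (G x y) ((↑) ⁻¹' Icc (a : EReal) b)) :
    LowerSemicontinuousOn (priceMenu X a b G u) K := by
  intro y hy c' hc'
  rcases lt_or_ge c' a with hlt | hge
  · exact eventually_nhdsWithin_of_forall fun _ _ => hlt.trans_le (priceMenu_mem_Icc hab).1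
  obtain ⟨c, hc'c, hcv⟩ := EReal.exists_between_coe_real hc'
  have hc : (c : EReal) ∈ Ico (a : EReal) b :=
    ⟨hge.trans hc'c.le, hcv.trans_le (priceMenu_mem_Icc hab).2⟩
  obtain ⟨x, hx, hux⟩ : ∃ x ∈ X, u x < G x y c := by
    by_contra! h
    exact hcv.not_ge (priceMenu_le_coe ⟨Ico_subset_Icc_self hc, h⟩)
  filter_upwards [(hcont_y x hx c (Ico_subset_Icc_self hc) y hy).eventually
    (eventually_gt_nhds hux), self_mem_nhdsWithin] with y' hy' hy'K
  exact hc'c.trans (coe_lt_priceMenu (hcont_z · · y' hy'K) (hanti · · y' hy'K) hc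
    fun hcT => (hcT.2 x hx).not_gt hy')

variable {GE : α → β → EReal → ℝ}

lemma GE_priceMenu_le (hGE : ∀ x y, ∀ z : ℝ, GE x y z = G x y z)
    (hcont : ∀ x ∈ X, ContinuousOn (G x y) ((↑) ⁻¹' Icc (a : EReal) b))
    (hb : ∀ x ∈ X, GE x y b ≤ u x) (hx : x ∈ X) : GE x y (priceMenu X a b G u y) ≤ u x := by
  unfold priceMenu
  split_ifs with hne
  · rw [hGE]
    exact (sInf_mem_supportPrices hcont hne).2 x hx
  · exact hb x hx

lemma GE_priceMenu_eq (hGE : ∀ x y, ∀ z : ℝ, GE x y z = G x y z)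
    (hcont : ∀ x ∈ X, ContinuousOn (G x y) ((↑) ⁻¹' Icc (a : EReal) b))
    (hanti : AntitoneOn (G x y) ((↑) ⁻¹' Icc (a : EReal) b))
    (hz : z ∈ supportPrices X a b G u y) (hx : x ∈ X) (hux : u x = G x y z) :
    GE x y (priceMenu X a b G u y) = u x := by
  have hmin := sInf_mem_supportPrices hcont ⟨z, hz⟩
  rw [priceMenu, if_pos ⟨z, hz⟩, hGE]
  exact le_antisymm (hmin.2 x hx) (hux ▸ hanti hmin.1 hz.1 (csInf_le bddBelow_supportPrices hz))

end PriceMenu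

lemma priceSet_eq_preimage (zl : ℝ) (zu : EReal) :
    priceSet zl zu = (↑) ⁻¹' Ioo (zl : EReal) zu := by
  ext z
  simp [priceSet]

lemma closure_priceSet {zl : ℝ} {zu : EReal} (h : (zl : EReal) < zu) :
    closure (priceSet zl zu) = (↑) ⁻¹' Icc (zl : EReal) zu := by
  rw [priceSet_eq_preimage, ← closure_Ioo h.ne,
    EReal.isOpenEmbedding_coe.isOpenMap.preimage_closure_eq_closure_preimage
      continuous_coe_real_ereal]

lemma closure_image_coe_priceSet {zl : ℝ} {zu : EReal} (h : (zl : EReal) < zu) :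
    closure ((↑) '' priceSet zl zu) = Icc (zl : EReal) zu := by
  rw [priceSet_eq_preimage, image_preimage_eq_of_subset, closure_Ioo h.ne]
  exact fun z hz => ⟨z.toReal, EReal.coe_toReal hz.2.ne_top (ne_bot_of_gt hz.1)⟩

lemma convex_preimage_coe_Icc (a : ℝ) (b : EReal) :
    Convex ℝ ((↑) ⁻¹' Icc (a : EReal) b : Set ℝ) :=
  convex_iff_ordConnected.mpr
    ⟨fun _ hx _ hy _ hz => ⟨hx.1.trans (EReal.coe_le_coe hz.1), (EReal.coe_le_coe hz.2).trans hy.2⟩⟩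

section Conditions

variable {X : Set (E m)} {Y : Set (E n)} {Z : Set ℝ} {G : E m → E n → ℝ → ℝ}
  {x : E m} {y : E n} {z : ℝ}

lemma CondG0.continuousOn_product (hG0 : CondG0 X Y Z G) (hx : x ∈ closure X)
    (hz : z ∈ closure Z) : ContinuousOn (fun y => G x y z) (closure Y) :=
  hG0.continuousOn.comp (continuousOn_const.prodMk (continuousOn_id.prodMk continuousOn_const))
    fun _ hy => ⟨hx, hy, hz⟩

lemma CondG4.continuousOn (hG4 : CondG4 X Y Z G) (hx : x ∈ X) (hy : y ∈ closure Y) :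
    ContinuousOn (G x y) (closure Z) := fun z hz =>
  (differentiableAt_of_deriv_ne_zero (hG4 x hx y hy z hz).ne).continuousAt.continuousWithinAt

lemma CondG4.strictAntiOn (hG4 : CondG4 X Y Z G) (hZ : Convex ℝ (closure Z)) (hx : x ∈ X)
    (hy : y ∈ closure Y) : StrictAntiOn (G x y) (closure Z) :=
  strictAntiOn_of_deriv_neg hZ (hG4.continuousOn hx hy) fun z hz =>
    hG4 x hx y hy z (interior_subset hz)

end Conditions

lemma GConvex.of_exists_max {X : Set (E m)} {Y : Set (E n)} {Z : Set ℝ}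
    {G : E m → E n → ℝ → ℝ} {GE : E m → E n → EReal → ℝ} {u : E m → ℝ} {v : E n → EReal}
    {a : ℝ} {b : EReal} (hZ : closure Z = (↑) ⁻¹' Icc (a : EReal) b)
    (hGE : ∀ x y, ∀ z : ℝ, GE x y z = G x y z) (hv : ∀ y ∈ closure Y, v y ∈ Icc (a : EReal) b)
    (htop : b = ⊤ → ∀ x ∈ X, ∀ y ∈ closure Y, GE x y ⊤ < u x)
    (hmax : ∀ x ∈ X, ∃ y₀ ∈ closure Y, u x = GE x y₀ (v y₀) ∧
      ∀ y ∈ closure Y, GE x y (v y) ≤ GE x y₀ (v y₀)) :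
    GConvex X Y Z G u := by
  intro x₀ hx₀
  obtain ⟨y₀, hy₀, hu₀, -⟩ := hmax x₀ hx₀
  have hv₀ := hv y₀ hy₀
  have hv₀_ne_top : v y₀ ≠ ⊤ := fun h =>
    (htop (top_le_iff.mp (h ▸ hv₀.2)) x₀ hx₀ y₀ hy₀).ne (h ▸ hu₀.symm)
  obtain ⟨z₀, hz₀⟩ : ∃ z : ℝ, (z : EReal) = v y₀ :=
    ⟨_, EReal.coe_toReal hv₀_ne_top (ne_bot_of_le_ne_bot (EReal.coe_ne_bot a) hv₀.1)⟩
  have hz₀Z : z₀ ∈ closure Z := by rw [hZ, mem_preimage, hz₀]; exact hv₀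
  refine ⟨y₀, hy₀, z₀, hz₀Z, by rw [hu₀, ← hz₀, hGE], fun x hx => ?_⟩
  obtain ⟨y, -, hu, hle⟩ := hmax x hx
  rw [hu, ← hGE, hz₀]
  exact hle y₀ hy₀

theorem gconvex_iff_pricemenu_of_outsideOption_general
    {m n : ℕ} (X : Set (E m)) (Y : Set (E n)) (zl : ℝ) (zu : EReal)
    (hzz : (zl : EReal) < zu) (Z : Set ℝ) (hZ : Z = priceSet zl zu)
    (G : E m → E n → ℝ → ℝ) (GE : E m → E n → EReal → ℝ)
    (hGE : ∀ x y, ∀ z : ℝ, GE x y (z : EReal) = G x y z)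
    (hG0 : CondG0 X Y Z G) (hG4 : CondG4 X Y Z G)
    (y0 : E n) (z0 : ℝ)
    (hG5 : y0 ∈ closure Y ∧ z0 ∈ closure Z ∧
      (∀ x ∈ X, ∀ y ∈ closure Y,
        Tendsto (fun z : ℝ => G x y z) (zFilter zu) (𝓝 (GE x y zu)) ∧
        GE x y zu ≤ G x y0 z0) ∧
      (zu = ⊤ → (∀ x ∈ X, ∀ y ∈ closure Y, GE x y zu < G x y0 z0) ∧
        ∃ zbig : ℝ, ∀ z : ℝ, zbig ≤ z → ∀ x ∈ X, ∀ y ∈ closure Y,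
          G x y z < G x y0 z0))
    (u : E m → ℝ)
    (huge : ∀ x ∈ X, G x y0 z0 ≤ u x) :
    GConvex X Y Z G u ↔
      ∃ v : E n → EReal,
        LowerSemicontinuousOn v (closure Y) ∧
        (∀ y ∈ closure Y, v y ∈ closure ((fun z : ℝ => (z : EReal)) '' Z)) ∧
        v y0 ≤ (z0 : EReal) ∧
        ∀ x ∈ X, ∃ y₀ ∈ closure Y, u x = GE x y₀ (v y₀) ∧
          ∀ y ∈ closure Y, GE x y (v y) ≤ GE x y₀ (v y₀) := by
  obtain ⟨-, hz0, hG5le, hG5top⟩ := hG5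
  have hZcl : closure Z = (↑) ⁻¹' Icc (zl : EReal) zu := hZ ▸ closure_priceSet hzz
  have hZim : closure ((↑) '' Z) = Icc (zl : EReal) zu := hZ ▸ closure_image_coe_priceSet hzz
  have hcont_y : ∀ x ∈ X, ∀ z ∈ closure Z, ContinuousOn (fun y => G x y z) (closure Y) :=
    fun x hx z hz => hG0.continuousOn_product (subset_closure hx) hz
  have hcont_z : ∀ x ∈ X, ∀ y ∈ closure Y, ContinuousOn (G x y) (closure Z) :=
    fun x hx y hy => hG4.continuousOn hx hy
  have hanti : ∀ x ∈ X, ∀ y ∈ closure Y, AntitoneOn (G x y) (closure Z) := fun x hx y hy =>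
    (hG4.strictAntiOn (hZcl ▸ convex_preimage_coe_Icc zl zu) hx hy).antitoneOn
  rw [hZim]
  rw [hZcl] at hz0 hcont_y hcont_z hanti
  constructor
  · intro hconv
    refine ⟨priceMenu X zl zu G u, lowerSemicontinuousOn_priceMenu hzz.le hcont_y hcont_z hanti,
      fun y _ => priceMenu_mem_Icc hzz.le, priceMenu_le_coe ⟨hz0, huge⟩, fun x hx => ?_⟩
    obtain ⟨y₀, hy₀, z₀, hz₀, hu₀, hsupp⟩ := hconv x hx
    have hv₀ := GE_priceMenu_eq hGE (hcont_z · · y₀ hy₀) (hanti x hx y₀ hy₀)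
      ⟨hZcl.subset hz₀, hsupp⟩ hx hu₀
    exact ⟨y₀, hy₀, hv₀.symm, fun y hy => hv₀ ▸ GE_priceMenu_le hGE (hcont_z · · y hy)
      (fun x hx => (hG5le x hx y hy).2.trans (huge x hx)) hx⟩
  · rintro ⟨v, -, hv, -, hmax⟩
    exact GConvex.of_exists_max hZcl hGE hv
      (fun htop x hx y hy => (htop ▸ (hG5top htop).1 x hx y hy).trans_le (huge x hx)) hmax

/-- Proposition 3.5(b): assume (G0), (G4) and (G5).  Then a
continuous `u : X → ℝ` with `u ≥ u_∅ := G(·, y_∅, z_∅)` is `G`-convex iff there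
is a lower semicontinuous price menu `v : cl Y → cl Z ⊆ [-∞,+∞]` with
`v(y_∅) ≤ z_∅` such that `u(x) = max_{y ∈ cl Y} G(x,y,v(y))`, the maximum being
attained.  `GE` denotes `G` extended to prices in `cl Z ⊆ EReal`, so that
`GE x y z̄ = lim_{z→z̄} G(x,y,z)` as in (G5). -/
theorem gconvex_iff_pricemenu_of_outsideOption
    {m n : ℕ} (X : Set (E m)) (Y : Set (E n)) (zl : ℝ) (zu : EReal)
    (hzz : (zl : EReal) < zu) (Z : Set ℝ) (hZ : Z = priceSet zl zu)
    (hXo : IsOpen X) (hXb : Bornology.IsBounded X)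
    (hYo : IsOpen Y) (hYb : Bornology.IsBounded Y)
    (G : E m → E n → ℝ → ℝ) (GE : E m → E n → EReal → ℝ)
    (hGE : ∀ x y, ∀ z : ℝ, GE x y (z : EReal) = G x y z)
    (hG0 : CondG0 X Y Z G) (hG4 : CondG4 X Y Z G)
    (y0 : E n) (z0 : ℝ)
    (hG5 : y0 ∈ closure Y ∧ z0 ∈ closure Z ∧
      (∀ x ∈ X, ∀ y ∈ closure Y,
        Tendsto (fun z : ℝ => G x y z) (zFilter zu) (𝓝 (GE x y zu)) ∧
        GE x y zu ≤ G x y0 z0) ∧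
      (zu = ⊤ → (∀ x ∈ X, ∀ y ∈ closure Y, GE x y zu < G x y0 z0) ∧
        ∃ zbig : ℝ, ∀ z : ℝ, zbig ≤ z → ∀ x ∈ X, ∀ y ∈ closure Y,
          G x y z < G x y0 z0))
    (u : E m → ℝ) (hu : ContinuousOn u X)
    (huge : ∀ x ∈ X, G x y0 z0 ≤ u x) :
    GConvex X Y Z G u ↔
      ∃ v : E n → EReal,
        LowerSemicontinuousOn v (closure Y) ∧
        (∀ y ∈ closure Y, v y ∈ closure ((fun z : ℝ => (z : EReal)) '' Z)) ∧
        v y0 ≤ (z0 : EReal) ∧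
        ∀ x ∈ X, ∃ y₀ ∈ closure Y, u x = GE x y₀ (v y₀) ∧
          ∀ y ∈ closure Y, GE x y (v y) ≤ GE x y₀ (v y₀) :=
  gconvex_iff_pricemenu_of_outsideOption_general X Y zl zu hzz Z hZ G GE hGE hG0 hG4 y0 z0 hG5 u
    huge

end PrincipalAgent
end
end

section
/- Assume (G4). A measurable map x ∈ X ↦ (y(x), z(x)) ∈ cl(Y×Z) is incentive compatible if and only if the function u(x) := G(x, y(x), z(x)) is G-convex on X and y(x) ∈ ∂^G u(x) for every x ∈ X. -/
/-!
Common framework for "The principal-agent problem: convexity/concavity of the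
principal's problem" (McCann–Zhang).

Agent types live in `X ⊆ ℝ^m`, product types in `Y ⊆ ℝ^n`, prices in
`Z = (z̲, z̄) ⊆ ℝ` with `z̲` finite and `z̄ ∈ (z̲, +∞]` (an `EReal`).
The direct utility is `G(x,y,z)` and the principal's profit density `π(x,y,z)`.
-/

open Set MeasureTheory Filter Topology

noncomputable section

namespace PrincipalAgent

variable {m n : ℕ}

/-! By (G4) each indifference curve `z ↦ G(x,y,z)` is strictly decreasing on the interval `cl Z`,
so the price witnessing `y ∈ ∂^G u(x)` is forced to be `z(x)` whenever `u(x) = G(x,y(x),z(x))`.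
Then `y(x) ∈ ∂^G u(x)` says `G(x',y(x),z(x)) ≤ u(x')` for all `x'`, which is incentive
compatibility with the roles of `x` and `x'` swapped; `G`-convexity follows from the
subdifferentials being nonempty. -/

lemma convex_priceSet (zl : ℝ) (zu : EReal) : Convex ℝ (priceSet zl zu) :=
  OrdConnected.convex ⟨fun _ ha _ hb _ hc =>
    ⟨ha.1.trans_le hc.1, (EReal.coe_le_coe_iff.mpr hc.2).trans_lt hb.2⟩⟩

lemma strictAntiOn_of_forall_deriv_neg {f : ℝ → ℝ} {D : Set ℝ} (hD : Convex ℝ D)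
    (hf : ∀ x ∈ D, deriv f x < 0) : StrictAntiOn f D :=
  strictAntiOn_of_deriv_neg hD
    (fun x hx => (differentiableAt_of_deriv_ne_zero (hf x hx).ne).continuousAt.continuousWithinAt)
    (fun x hx => hf x (interior_subset hx))

section

variable {X : Set (E m)} {Y : Set (E n)} {Z : Set ℝ} {G : E m → E n → ℝ → ℝ}

lemma CondG4.injOn (hG4 : CondG4 X Y Z G) (hZ : Convex ℝ Z) {x : E m} (hx : x ∈ X) {y : E n}
    (hy : y ∈ closure Y) : InjOn (G x y) (closure Z) :=
  (strictAntiOn_of_forall_deriv_neg hZ.closure (hG4 x hx y hy)).injOn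

lemma mem_gSubdiff_iff {u : E m → ℝ} {x : E m} {y : E n} {z : ℝ}
    (hinj : InjOn (G x y) (closure Z)) (hy : y ∈ closure Y) (hz : z ∈ closure Z)
    (hu : u x = G x y z) :
    y ∈ GSubdiff X Y Z G u x ↔ ∀ x' ∈ X, G x' y z ≤ u x' := by
  constructor
  · rintro ⟨-, z', hz', hz'u, hle⟩
    obtain rfl : z' = z := hinj hz' hz (hz'u.trans hu)
    exact hle
  · exact fun hle => ⟨hy, z, hz, hu.symm, hle⟩

lemma gConvex_of_forall_gSubdiff_nonempty {u : E m → ℝ}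
    (h : ∀ x ∈ X, (GSubdiff X Y Z G u x).Nonempty) : GConvex X Y Z G u := by
  intro x hx
  obtain ⟨y, hy, z, hz, hzu, hle⟩ := h x hx
  exact ⟨y, hy, z, hz, hzu.symm, hle⟩

end

theorem incentiveCompatible_iff_gconvex_general
    {m n : ℕ} (X : Set (E m)) (Y : Set (E n)) (zl : ℝ) (zu : EReal)
    (Z : Set ℝ) (hZ : Z = priceSet zl zu)
    (G : E m → E n → ℝ → ℝ)
    (hG4 : CondG4 X Y Z G)
    (y : E m → E n) (z : E m → ℝ)
    (hrange : ∀ x ∈ X, y x ∈ closure Y ∧ z x ∈ closure Z) :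
    (∀ x ∈ X, ∀ x' ∈ X, G x (y x') (z x') ≤ G x (y x) (z x)) ↔
      (GConvex X Y Z G (fun x => G x (y x) (z x)) ∧
        ∀ x ∈ X, y x ∈ GSubdiff X Y Z G (fun x' => G x' (y x') (z x')) x) := by
  have hsub_iff : ∀ x ∈ X, y x ∈ GSubdiff X Y Z G (fun x' => G x' (y x') (z x')) x ↔
      ∀ x' ∈ X, G x' (y x) (z x) ≤ G x' (y x') (z x') := fun x hx =>
    mem_gSubdiff_iff (hG4.injOn (hZ ▸ convex_priceSet zl zu) hx (hrange x hx).1)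
      (hrange x hx).1 (hrange x hx).2 rfl
  constructor
  · intro hIC
    have hsub : ∀ x ∈ X, y x ∈ GSubdiff X Y Z G (fun x' => G x' (y x') (z x')) x :=
      fun x hx => (hsub_iff x hx).2 fun x' hx' => hIC x' hx' x hx
    exact ⟨gConvex_of_forall_gSubdiff_nonempty fun x hx => ⟨y x, hsub x hx⟩, hsub⟩
  · rintro ⟨-, hsub⟩ x hx x' hx'
    exact (hsub_iff x' hx').1 (hsub x' hx') x hx

/-- Lemma 3.7: assume (G4).  A measurable map
`x ∈ X ↦ (y(x), z(x)) ∈ cl(Y × Z)` is incentive compatible iff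
`u(x) := G(x, y(x), z(x))` is `G`-convex on `X` and `y(x) ∈ ∂^G u(x)` for every
`x ∈ X`. -/
theorem incentiveCompatible_iff_gconvex
    {m n : ℕ} (X : Set (E m)) (Y : Set (E n)) (zl : ℝ) (zu : EReal)
    (hzz : (zl : EReal) < zu) (Z : Set ℝ) (hZ : Z = priceSet zl zu)
    (hXo : IsOpen X) (hXb : Bornology.IsBounded X)
    (hYo : IsOpen Y) (hYb : Bornology.IsBounded Y)
    (G : E m → E n → ℝ → ℝ)
    (hG4 : CondG4 X Y Z G)
    (y : E m → E n) (z : E m → ℝ)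
    (hymeas : Measurable y) (hzmeas : Measurable z)
    (hrange : ∀ x ∈ X, y x ∈ closure Y ∧ z x ∈ closure Z) :
    (∀ x ∈ X, ∀ x' ∈ X, G x (y x') (z x') ≤ G x (y x) (z x)) ↔
      (GConvex X Y Z G (fun x => G x (y x) (z x)) ∧
        ∀ x ∈ X, y x ∈ GSubdiff X Y Z G (fun x' => G x' (y x') (z x')) x) :=
  incentiveCompatible_iff_gconvex_general X Y zl zu Z hZ G hG4 y z hrange

end PrincipalAgent
end
end

section
/- Assume (G0), (G4) and z̄ < +∞. If (u_k) is a sequence of G-convex functions on X converging uniformly on X to a function u_∞, then u_∞ is G-convex. -/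
/-!
Common framework for "The principal-agent problem: convexity/concavity of the
principal's problem" (McCann–Zhang).

Agent types live in `X ⊆ ℝ^m`, product types in `Y ⊆ ℝ^n`, prices in
`Z = (z̲, z̄) ⊆ ℝ` with `z̲` finite and `z̄ ∈ (z̲, +∞]` (an `EReal`).
The direct utility is `G(x,y,z)` and the principal's profit density `π(x,y,z)`.
-/

open Set MeasureTheory Filter Topology

noncomputable section

namespace PrincipalAgent

variable {m n : ℕ}

theorem CondG0.continuousOn_slice {X : Set (E m)} {Y : Set (E n)} {Z : Set ℝ}
    {G : E m → E n → ℝ → ℝ} (hG0 : CondG0 X Y Z G) {x : E m} (hx : x ∈ closure X) :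
    ContinuousOn (fun p : E n × ℝ => G x p.1 p.2) (closure Y ×ˢ closure Z) :=
  hG0.continuousOn.comp (continuousOn_const.prodMk continuousOn_id)
    fun _ hp => ⟨hx, hp⟩

theorem GConvex.of_tendsto {X : Set (E m)} {Y : Set (E n)} {Z : Set ℝ}
    {G : E m → E n → ℝ → ℝ} (hK : IsCompact (closure Y ×ˢ closure Z))
    (hG : ∀ x ∈ X, ContinuousOn (fun p : E n × ℝ => G x p.1 p.2) (closure Y ×ˢ closure Z))
    {u : ℕ → E m → ℝ} (hu : ∀ k, GConvex X Y Z G (u k)) {uinf : E m → ℝ}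
    (hlim : ∀ x ∈ X, Tendsto (fun k => u k x) atTop (𝓝 (uinf x))) :
    GConvex X Y Z G uinf := by
  intro x₀ hx₀
  choose y hy z hz hsupp hle using fun k => hu k x₀ hx₀
  obtain ⟨p₀, hp₀, φ, hφ, hyz⟩ :=
    hK.tendsto_subseq (x := fun k => (y k, z k)) fun k => ⟨hy k, hz k⟩
  have hG_lim : ∀ x ∈ X,
      Tendsto (fun j => G x (y (φ j)) (z (φ j))) atTop (𝓝 (G x p₀.1 p₀.2)) :=
    fun x hx => (hG x hx p₀ hp₀).tendsto.comp <|
      tendsto_nhdsWithin_iff.2 ⟨hyz, Eventually.of_forall fun j => ⟨hy (φ j), hz (φ j)⟩⟩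
  have hu_lim : ∀ x ∈ X, Tendsto (fun j => u (φ j) x) atTop (𝓝 (uinf x)) :=
    fun x hx => (hlim x hx).comp hφ.tendsto_atTop
  refine ⟨p₀.1, hp₀.1, p₀.2, hp₀.2, ?_, fun x hx => ?_⟩
  · exact tendsto_nhds_unique (hu_lim x₀ hx₀) <| by simpa only [hsupp] using hG_lim x₀ hx₀
  · exact le_of_tendsto_of_tendsto' (hG_lim x hx) (hu_lim x hx) fun j => hle (φ j) x hx

theorem gconvex_of_tendstoUniformlyOn_general
    {m n : ℕ} (X : Set (E m)) (Y : Set (E n)) (zl zu : ℝ)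
    (Z : Set ℝ) (hZ : Z = Ioo zl zu)
    (hYb : Bornology.IsBounded Y)
    (G : E m → E n → ℝ → ℝ)
    (hG0 : CondG0 X Y Z G)
    (u : ℕ → E m → ℝ) (hu : ∀ k, GConvex X Y Z G (u k))
    (uinf : E m → ℝ)
    (hconv : TendstoUniformlyOn u uinf atTop X) :
    GConvex X Y Z G uinf := by
  have hZb : Bornology.IsBounded Z := hZ ▸ Metric.isBounded_Ioo zl zu
  exact GConvex.of_tendsto (hYb.isCompact_closure.prod hZb.isCompact_closure)
    (fun x hx => hG0.continuousOn_slice (subset_closure hx)) hu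
    (fun x hx => hconv.tendsto_at hx)

/-- steps 4.3–4.6 of the proof of Theorem 3.9: assume (G0),
(G4) and `z̄ < +∞`.  If a sequence `(u_k)` of `G`-convex functions converges
uniformly on `X` to `u_∞`, then `u_∞` is `G`-convex. -/
theorem gconvex_of_tendstoUniformlyOn
    {m n : ℕ} (X : Set (E m)) (Y : Set (E n)) (zl zu : ℝ)
    (hzz : zl < zu) (Z : Set ℝ) (hZ : Z = Ioo zl zu)
    (hXo : IsOpen X) (hXb : Bornology.IsBounded X)
    (hYo : IsOpen Y) (hYb : Bornology.IsBounded Y)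
    (G : E m → E n → ℝ → ℝ)
    (hG0 : CondG0 X Y Z G) (hG4 : CondG4 X Y Z G)
    (u : ℕ → E m → ℝ) (hu : ∀ k, GConvex X Y Z G (u k))
    (uinf : E m → ℝ)
    (hconv : TendstoUniformlyOn u uinf atTop X) :
    GConvex X Y Z G uinf :=
  gconvex_of_tendstoUniformlyOn_general X Y zl zu Z hZ hYb G hG0 u hu uinf hconv

end PrincipalAgent
end
end

section
/- Assume (G0), (G1) and (G2). Then (G3) holds if and only if the set U := { u : X → ℝ : u is G-convex } is convex, i.e. (1−t)u₀ + t u₁ is G-convex whenever u₀, u₁ are G-convex and t ∈ [0,1]. -/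
/-!
Common framework for "The principal-agent problem: convexity/concavity of the
principal's problem" (McCann–Zhang).

Agent types live in `X ⊆ ℝ^m`, product types in `Y ⊆ ℝ^n`, prices in
`Z = (z̲, z̄) ⊆ ℝ` with `z̲` finite and `z̄ ∈ (z̲, +∞]` (an `EReal`).
The direct utility is `G(x,y,z)` and the principal's profit density `π(x,y,z)`.
-/

open Set MeasureTheory Filter Topology

noncomputable section

/-!
Along a `G`-segment the pair `(G_x, G)(x₀, ·)` moves affinely. If `(y₀, z₀)` and `(y₁, z₁)`
support `u₀` and `u₁` at `x₀`, then by (G3) the point `(y_t, z_t)` of the `G`-segment joining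
them supports `(1 - t) u₀ + t u₁` at `x₀`. Conversely, a support at the interior point
`x₀` of `(1 - t) G(·, y_{s₀}, z_{s₀}) + t G(·, y_{s₁}, z_{s₁})` matches its value and gradient
there, so by (G1) it is the point of the `G`-segment at the averaged parameter, and its support
inequality is the convexity inequality of (G3).
-/

theorem HasGradientAt.eq_of_eventuallyLE_of_eq {F : Type*} [NormedAddCommGroup F]
    [InnerProductSpace ℝ F] [CompleteSpace F] {f g : F → ℝ} {f' g' x₀ : F}
    (hf : HasGradientAt f f' x₀) (hg : HasGradientAt g g' x₀)
    (hle : g ≤ᶠ[𝓝 x₀] f) (heq : g x₀ = f x₀) : g' = f' := by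
  have hmin : IsLocalMin (fun x => f x - g x) x₀ := by
    filter_upwards [hle] with x hx
    linarith
  have hzero := hmin.hasFDerivAt_eq_zero
    ((hasGradientAt_iff_hasFDerivAt.mp hf).sub (hasGradientAt_iff_hasFDerivAt.mp hg))
  rw [sub_eq_zero, (InnerProductSpace.toDual ℝ F).injective.eq_iff] at hzero
  exact hzero.symm

theorem HasGradientAt.const_mul_add_const_mul {F : Type*} [NormedAddCommGroup F]
    [InnerProductSpace ℝ F] [CompleteSpace F] {f g : F → ℝ} {f' g' x : F}
    (hf : HasGradientAt f f' x) (hg : HasGradientAt g g' x) (a b : ℝ) :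
    HasGradientAt (fun y => a * f y + b * g y) (a • f' + b • g') x := by
  rw [hasGradientAt_iff_hasFDerivAt] at hf hg ⊢
  rw [map_add, map_smul, map_smul]
  exact (hf.const_mul a).add (hg.const_mul b)

theorem exists_affine_lift {α β : Type*} [AddCommGroup β] [Module ℝ β] {f : α → β}
    {S : Set α} (hinj : InjOn f S) (hconv : Convex ℝ (f '' S)) {p₀ p₁ : α}
    (h₀ : p₀ ∈ S) (h₁ : p₁ ∈ S) :
    ∃ γ : ℝ → α, γ 0 = p₀ ∧ γ 1 = p₁ ∧
      ∀ t ∈ Icc (0:ℝ) 1, γ t ∈ S ∧ f (γ t) = (1 - t) • f p₀ + t • f p₁ := by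
  have : Nonempty α := ⟨p₀⟩
  refine ⟨fun t => Function.invFunOn f S ((1 - t) • f p₀ + t • f p₁), ?_, ?_, fun t ht => ?_⟩
  · simpa using hinj.leftInvOn_invFunOn h₀
  · simpa using hinj.leftInvOn_invFunOn h₁
  · have hmem : ∃ p ∈ S, f p = (1 - t) • f p₀ + t • f p₁ :=
      hconv (mem_image_of_mem f h₀) (mem_image_of_mem f h₁) (sub_nonneg.2 ht.2) ht.1
        (sub_add_cancel 1 t)
    exact ⟨Function.invFunOn_mem hmem, Function.invFunOn_eq hmem⟩

namespace PrincipalAgent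

variable {m n : ℕ} {X : Set (E m)} {Y : Set (E n)} {Z : Set ℝ} {G : E m → E n → ℝ → ℝ}

theorem CondG0.differentiableAt (hG0 : CondG0 X Y Z G) (hXo : IsOpen X) {x₀ : E m}
    (hx₀ : x₀ ∈ X) {p : E n × ℝ} (hp : p ∈ closure Y ×ˢ closure Z) :
    DifferentiableAt ℝ (fun x => G x p.1 p.2) x₀ := by
  have hG : DifferentiableWithinAt ℝ (fun q : E m × E n × ℝ => G q.1 q.2.1 q.2.2)
      (closure X ×ˢ (closure Y ×ˢ closure Z)) (x₀, p) :=
    hG0.differentiableOn one_ne_zero _ (mk_mem_prod (subset_closure hx₀) hp)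
  have hslice : DifferentiableWithinAt ℝ (fun x => G x p.1 p.2) (closure X) x₀ :=
    hG.comp x₀ (differentiableWithinAt_id.prodMk (differentiableWithinAt_const _))
      fun _ hx => mk_mem_prod hx hp
  exact hslice.differentiableAt (mem_of_superset (hXo.mem_nhds hx₀) subset_closure)

theorem gConvex_G {p : E n × ℝ} (hp : p ∈ closure Y ×ˢ closure Z) :
    GConvex X Y Z G (fun x => G x p.1 p.2) := by
  intro _ _
  exact ⟨p.1, hp.1, p.2, hp.2, rfl, fun _ _ => le_rfl⟩

theorem phi_eq_of_support (hG0 : CondG0 X Y Z G) (hXo : IsOpen X) {x₀ : E m}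
    (hx₀ : x₀ ∈ X) {p : E n × ℝ} (hp : p ∈ closure Y ×ˢ closure Z) {u : E m → ℝ} {u' : E m}
    (hu : HasGradientAt u u' x₀) (heq : u x₀ = G x₀ p.1 p.2)
    (hle : ∀ x ∈ X, G x p.1 p.2 ≤ u x) :
    Phi G x₀ p = (u', u x₀) := by
  have hGx : Gx G x₀ p.1 p.2 = u' :=
    hu.eq_of_eventuallyLE_of_eq (hG0.differentiableAt hXo hx₀ hp).hasGradientAt
      (eventually_of_mem (hXo.mem_nhds hx₀) hle) heq.symm
  exact Prod.ext hGx heq.symm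

theorem exists_isGSegment {x₀ : E m} (hinj : InjOn (Phi G x₀) (closure Y ×ˢ closure Z))
    (hconv : Convex ℝ (Phi G x₀ '' (closure Y ×ˢ closure Z))) {p₀ p₁ : E n × ℝ}
    (h₀ : p₀ ∈ closure Y ×ˢ closure Z) (h₁ : p₁ ∈ closure Y ×ˢ closure Z) :
    ∃ γ : ℝ → E n × ℝ, IsGSegment Y Z G x₀ γ ∧ γ 0 = p₀ ∧ γ 1 = p₁ := by
  obtain ⟨γ, hγ₀, hγ₁, hγ⟩ := exists_affine_lift hinj hconv h₀ h₁
  refine ⟨γ, ⟨fun t ht => (hγ t ht).1, fun t ht => ?_⟩, hγ₀, hγ₁⟩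
  rw [hγ₀, hγ₁]
  exact (hγ t ht).2

theorem IsGSegment.phi_combo {x₀ : E m} {γ : ℝ → E n × ℝ} (hγ : IsGSegment Y Z G x₀ γ)
    {s₀ s₁ a b : ℝ} (hs₀ : s₀ ∈ Icc (0:ℝ) 1) (hs₁ : s₁ ∈ Icc (0:ℝ) 1) (ha : 0 ≤ a) (hb : 0 ≤ b)
    (hab : a + b = 1) :
    Phi G x₀ (γ (a • s₀ + b • s₁)) = a • Phi G x₀ (γ s₀) + b • Phi G x₀ (γ s₁) := by
  rw [hγ.2 _ (convex_Icc 0 1 hs₀ hs₁ ha hb hab), hγ.2 s₀ hs₀, hγ.2 s₁ hs₁,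
    ← sub_eq_of_eq_add' hab.symm]
  module

theorem GConvex.combo_of_condG3 (hinj : ∀ x ∈ X, InjOn (Phi G x) (closure Y ×ˢ closure Z))
    (hG2 : CondG2 X Y Z G) (hG3 : CondG3 X Y Z G) {u₀ u₁ : E m → ℝ}
    (hu₀ : GConvex X Y Z G u₀) (hu₁ : GConvex X Y Z G u₁) {t : ℝ} (ht : t ∈ Icc (0:ℝ) 1) :
    GConvex X Y Z G (fun x => (1 - t) * u₀ x + t * u₁ x) := by
  intro x₀ hx₀
  obtain ⟨y₀, hy₀, z₀, hz₀, he₀, hle₀⟩ := hu₀ x₀ hx₀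
  obtain ⟨y₁, hy₁, z₁, hz₁, he₁, hle₁⟩ := hu₁ x₀ hx₀
  obtain ⟨γ, hγ, hγ₀, hγ₁⟩ := exists_isGSegment (hinj x₀ hx₀) (hG2 x₀ hx₀)
    (p₀ := (y₀, z₀)) ⟨hy₀, hz₀⟩ (p₁ := (y₁, z₁)) ⟨hy₁, hz₁⟩
  obtain ⟨hyt, hzt⟩ := hγ.1 t ht
  refine ⟨(γ t).1, hyt, (γ t).2, hzt, ?_, fun x hx => ?_⟩
  · have hvalue := congrArg Prod.snd (hγ.2 t ht)
    simp only [Phi, hγ₀, hγ₁, Prod.snd_add, Prod.smul_snd, smul_eq_mul] at hvalue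
    show (1 - t) * u₀ x₀ + t * u₁ x₀ = _
    rw [hvalue, he₀, he₁]
  · have hconvex := (hG3 x hx x₀ hx₀ γ hγ).2 (left_mem_Icc.2 zero_le_one)
      (right_mem_Icc.2 zero_le_one) (sub_nonneg.2 ht.2) ht.1 (sub_add_cancel 1 t)
    simp only [smul_eq_mul, mul_zero, mul_one, zero_add, hγ₀, hγ₁] at hconvex
    exact hconvex.trans (add_le_add (mul_le_mul_of_nonneg_left (hle₀ x hx) (sub_nonneg.2 ht.2))
      (mul_le_mul_of_nonneg_left (hle₁ x hx) ht.1))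

theorem condG3_of_gConvex_combo (hXo : IsOpen X) (hG0 : CondG0 X Y Z G)
    (hinj : ∀ x ∈ X, InjOn (Phi G x) (closure Y ×ˢ closure Z))
    (hU : ∀ u₀ u₁ : E m → ℝ, GConvex X Y Z G u₀ → GConvex X Y Z G u₁ →
      ∀ t ∈ Icc (0:ℝ) 1, GConvex X Y Z G (fun x => (1 - t) * u₀ x + t * u₁ x)) :
    CondG3 X Y Z G := by
  intro x hx x₀ hx₀ γ hγ
  refine ⟨convex_Icc 0 1, fun s₀ hs₀ s₁ hs₁ a b ha hb hab => ?_⟩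
  obtain rfl : a = 1 - b := by linarith
  have hp₀ := hγ.1 s₀ hs₀
  have hp₁ := hγ.1 s₁ hs₁
  obtain ⟨y, hy, z, hz, heq, hle⟩ :=
    hU _ _ (gConvex_G hp₀) (gConvex_G hp₁) b ⟨hb, by linarith⟩ x₀ hx₀
  have hsupport : Phi G x₀ (y, z) = (1 - b) • Phi G x₀ (γ s₀) + b • Phi G x₀ (γ s₁) :=
    phi_eq_of_support hG0 hXo hx₀ (p := (y, z)) ⟨hy, hz⟩
      (((hG0.differentiableAt hXo hx₀ hp₀).hasGradientAt).const_mul_add_const_mul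
        (hG0.differentiableAt hXo hx₀ hp₁).hasGradientAt (1 - b) b) heq hle
  have hyz : (y, z) = γ ((1 - b) • s₀ + b • s₁) :=
    hinj x₀ hx₀ ⟨hy, hz⟩ (hγ.1 _ (convex_Icc 0 1 hs₀ hs₁ ha hb hab))
      (hsupport.trans (hγ.phi_combo hs₀ hs₁ ha hb hab).symm)
  beta_reduce
  rw [← hyz]
  simpa only [smul_eq_mul] using hle x hx

theorem condG3_iff_gconvex_set_convex_general
    {m n : ℕ} (X : Set (E m)) (Y : Set (E n)) (Z : Set ℝ)
    (hXo : IsOpen X)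
    (G : E m → E n → ℝ → ℝ)
    (hG0 : CondG0 X Y Z G) (hG1 : CondG1 X Y Z G) (hG2 : CondG2 X Y Z G) :
    CondG3 X Y Z G ↔
      ∀ u₀ u₁ : E m → ℝ, GConvex X Y Z G u₀ → GConvex X Y Z G u₁ →
        ∀ t ∈ Icc (0:ℝ) 1,
          GConvex X Y Z G (fun x => (1 - t) * u₀ x + t * u₁ x) := by
  have hinj : ∀ x ∈ X, InjOn (Phi G x) (closure Y ×ˢ closure Z) := fun x hx => (hG1 x hx).2.1
  exact ⟨fun hG3 _ _ hu₀ hu₁ _ ht => hu₀.combo_of_condG3 hinj hG2 hG3 hu₁ ht,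
    condG3_of_gConvex_combo hXo hG0 hinj⟩

/-- Theorem 4.1: assume (G0), (G1) and (G2).  Then (G3) holds
if and only if the set `U` of `G`-convex functions is convex, i.e.
`(1-t)u₀ + t u₁` is `G`-convex whenever `u₀, u₁` are `G`-convex and
`t ∈ [0,1]`. -/
theorem condG3_iff_gconvex_set_convex
    {m n : ℕ} (X : Set (E m)) (Y : Set (E n)) (zl : ℝ) (zu : EReal)
    (hzz : (zl : EReal) < zu) (Z : Set ℝ) (hZ : Z = priceSet zl zu)
    (hXo : IsOpen X) (hXb : Bornology.IsBounded X)
    (hYo : IsOpen Y) (hYb : Bornology.IsBounded Y)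
    (G : E m → E n → ℝ → ℝ)
    (hG0 : CondG0 X Y Z G) (hG1 : CondG1 X Y Z G) (hG2 : CondG2 X Y Z G) :
    CondG3 X Y Z G ↔
      ∀ u₀ u₁ : E m → ℝ, GConvex X Y Z G u₀ → GConvex X Y Z G u₁ →
        ∀ t ∈ Icc (0:ℝ) 1,
          GConvex X Y Z G (fun x => (1 - t) * u₀ x + t * u₁ x) :=
  condG3_iff_gconvex_set_convex_general X Y Z hXo G hG0 hG1 hG2

end PrincipalAgent
end
end
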